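/- arXiv:1106.4769 — 3 statements merged into one kernel-verified Lean document; each statement's English description precedes it below -/
import Mathlib

section
/- For every t > 0, every complex number z with 0 < |z| < e^{−α₁ t} belongs to the spectrum of Sₜ; more precisely, zI − Sₜ is not surjective on L²_ω(ℝ⁺). -/
open MeasureTheory Filter

/-- The weighted measure `ω(x)² dx` on `ℝ⁺`. -/
noncomputable def wMeasure (ω : ℝ → ℝ) : Measure ℝ :=
  (volume.restrict (Set.Ici (0 : ℝ))).withDensity fun x => ENNReal.ofReal (ω x ^ 2)

/-- The weighted space `L²_ω(ℝ⁺)`. -/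
noncomputable abbrev Hw (ω : ℝ → ℝ) := Lp ℂ 2 (wMeasure ω)

/-- `ω` is a weight on `ℝ⁺`. -/
structure IsWeight (ω : ℝ → ℝ) : Prop where
  pos : ∀ x, 0 < ω x
  cont : Continuous ω
  bdd : ∀ t : ℝ, 0 ≤ t → ∃ c C : ℝ, 0 < c ∧
    ∀ x : ℝ, 0 ≤ x → c ≤ ω (x + t) / ω x ∧ ω (x + t) / ω x ≤ C

/-- `S` is the right translation `Sₜ` on `L²_ω(ℝ⁺)`:
`(Sₜ f)(x) = f (x - t)` if `x ≥ t` and `0` otherwise. -/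
def IsRightShift (ω : ℝ → ℝ) (t : ℝ) (S : Hw ω →L[ℂ] Hw ω) : Prop :=
  ∀ f : Hw ω, (S f : ℝ → ℂ) =ᵐ[wMeasure ω]
    fun x => if t ≤ x then (f : ℝ → ℂ) (x - t) else 0

/-- `P` is the truncated left translation `P⁺S₋ₜ` on `L²_ω(ℝ⁺)`:
`(P⁺S₋ₜ f)(x) = f (x + t)`. -/
def IsLeftShift (ω : ℝ → ℝ) (t : ℝ) (P : Hw ω →L[ℂ] Hw ω) : Prop :=
  ∀ f : Hw ω, (P f : ℝ → ℂ) =ᵐ[wMeasure ω] fun x => (f : ℝ → ℂ) (x + t)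

lemma wm_apply' (ω : ℝ → ℝ) {s : Set ℝ} (hmeas : MeasurableSet s) (hs : s ⊆ Set.Ici 0) :
    wMeasure ω s = ∫⁻ x in s, ENNReal.ofReal (ω x ^ 2) ∂volume := by
  rw [wMeasure, withDensity_apply _ hmeas, Measure.restrict_restrict hmeas,
    Set.inter_eq_left.mpr hs]

lemma wm_fin' (ω : ℝ → ℝ) (hc : Continuous ω) (t : ℝ) :
    wMeasure ω (Set.Icc 0 t) ≠ ⊤ := by
  rw [wm_apply' ω measurableSet_Icc (fun x hx => hx.1)]
  have hfin := setLIntegral_lt_top_of_isCompact (μ := volume) (s := Set.Icc (0:ℝ) t)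
    (by simp [Real.volume_Icc]) isCompact_Icc
    (f := fun x => ((⟨ω x ^ 2, sq_nonneg _⟩ : NNReal))) (Continuous.subtype_mk (hc.pow 2) _)
  rw [← lt_top_iff_ne_top]
  convert hfin using 2; funext x
  exact ENNReal.ofReal_eq_coe_nnreal (sq_nonneg _)

lemma wm_pos' (ω : ℝ → ℝ) (hc : Continuous ω) (hpos : ∀ x, 0 < ω x) (t : ℝ) (ht : 0 < t) :
    wMeasure ω (Set.Ico 0 t) ≠ 0 := by
  rw [wm_apply' ω measurableSet_Ico (fun x hx => hx.1)]
  obtain ⟨x₀, hx₀, hmin⟩ := isCompact_Icc.exists_isMinOn (Set.nonempty_Icc.mpr ht.le)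
    (hc.continuousOn (s := Set.Icc 0 t))
  have hlb : ∫⁻ x in Set.Ico (0:ℝ) t, ENNReal.ofReal (ω x₀ ^ 2) ∂volume
      ≤ ∫⁻ x in Set.Ico (0:ℝ) t, ENNReal.ofReal (ω x ^ 2) ∂volume := by
    apply setLIntegral_mono' measurableSet_Ico
    intro x hx
    exact ENNReal.ofReal_le_ofReal
      (pow_le_pow_left₀ (hpos x₀).le (hmin (Set.mem_Icc_of_Ico hx)) 2)
  intro h0
  rw [h0] at hlb
  simp only [lintegral_const, Measure.restrict_apply MeasurableSet.univ, Set.univ_inter,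
    Real.volume_Ico, sub_zero, nonpos_iff_eq_zero, mul_eq_zero] at hlb
  rcases hlb with h | h
  · rw [ENNReal.ofReal_eq_zero] at h
    nlinarith [hpos x₀]
  · rw [ENNReal.ofReal_eq_zero] at h
    linarith

lemma exists_ker_elt (ω : ℝ → ℝ) (hω : IsWeight ω) (t : ℝ) (ht : 0 < t)
    (S P : Hw ω →L[ℂ] Hw ω) (hS : IsRightShift ω t S) (hPS : P.comp S = 1) :
    ∃ g : Hw ω, g ≠ 0 ∧ P g = 0 := by
  set μ := wMeasure ω
  set g₀ : Hw ω := indicatorConstLp 2 measurableSet_Icc (wm_fin' ω hω.cont t) (1 : ℂ) with hg₀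
  refine ⟨g₀ - S (P g₀), ?_, ?_⟩
  · intro h
    have heq : g₀ = S (P g₀) := by rwa [sub_eq_zero] at h
    have h1 : ⇑g₀ =ᵐ[μ] (Set.Icc (0:ℝ) t).indicator fun _ => (1:ℂ) :=
      indicatorConstLp_coeFn
    have h2 : ⇑(S (P g₀)) =ᵐ[μ] fun x => if t ≤ x then (↑↑(P g₀) : ℝ → ℂ) (x - t) else 0 :=
      hS (P g₀)
    have h3 : ∀ᵐ x ∂μ, (Set.Icc (0:ℝ) t).indicator (fun _ => (1:ℂ)) x
        = if t ≤ x then (↑↑(P g₀) : ℝ → ℂ) (x - t) else 0 := by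
      filter_upwards [h1, h2] with x hx1 hx2
      rw [← hx1]; conv_lhs => rw [heq, hx2]
    have hsub : Set.Ico (0:ℝ) t ⊆ {x | ¬ ((Set.Icc (0:ℝ) t).indicator (fun _ => (1:ℂ)) x
        = if t ≤ x then (↑↑(P g₀) : ℝ → ℂ) (x - t) else 0)} := by
      intro x hx
      simp only [Set.mem_setOf_eq]
      rw [Set.indicator_of_mem (Set.mem_Icc_of_Ico hx), if_neg (not_le.mpr hx.2)]
      exact one_ne_zero
    exact wm_pos' ω hω.cont hω.pos t ht (measure_mono_null hsub h3)
  · rw [map_sub, ← ContinuousLinearMap.comp_apply, hPS, ContinuousLinearMap.one_apply,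
      sub_self]

/-- for `t > 0`, every `z` with `0 < |z| < e^{-α₁ t}` belongs to
`σ(Sₜ)`; more precisely `zI - Sₜ` is not surjective. -/
theorem stmt_3 (ω : ℝ → ℝ) (hω : IsWeight ω) (t : ℝ) (ht : 0 < t)
    (S P : Hw ω →L[ℂ] Hw ω) (hS : IsRightShift ω t S) (hP : IsLeftShift ω t P)
    (hPS : P.comp S = 1)
    (α₁ : ℝ) (hρ : spectralRadius ℂ P = ENNReal.ofReal (Real.exp (α₁ * t)))
    (z : ℂ) (hz0 : 0 < ‖z‖) (hz1 : ‖z‖ < Real.exp (-α₁ * t)) :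
    z ∈ spectrum ℂ S ∧
      ¬ Function.Surjective ⇑(z • (1 : Hw ω →L[ℂ] Hw ω) - S) := by
  obtain ⟨g, hgne, hPg⟩ := exists_ker_elt ω hω t ht S P hS hPS
  have hzne : z ≠ 0 := by
    intro h; rw [h, norm_zero] at hz0; exact lt_irrefl 0 hz0
  have hnsurj : ¬ Function.Surjective ⇑(z • (1 : Hw ω →L[ℂ] Hw ω) - S) := by
    intro hsurj
    obtain ⟨f, hf⟩ := hsurj g
    -- f satisfies z • f - S f = g
    have hf' : z • f - S f = g := by
      rw [← hf]; simp [ContinuousLinearMap.sub_apply, ContinuousLinearMap.smul_apply]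
    -- apply P
    have hPf : z • P f - f = 0 := by
      have := congrArg P hf'
      rw [hPg, map_sub, P.map_smul, ← ContinuousLinearMap.comp_apply P S, hPS,
        ContinuousLinearMap.one_apply] at this
      exact this
    have hfne : f ≠ 0 := by
      intro h
      apply hgne
      rw [← hf', h, smul_zero, map_zero, sub_zero]
    have heig : P f = z⁻¹ • f := by
      have h1 : z • P f = f := by rwa [sub_eq_zero] at hPf
      have h2 := congrArg (fun v => z⁻¹ • v) h1
      simp only [smul_smul, inv_mul_cancel₀ hzne, one_smul] at h2
      exact h2
    -- z⁻¹ is in the spectrum of P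
    have hmem : z⁻¹ ∈ spectrum ℂ P := by
      rw [spectrum.mem_iff]
      intro hU
      obtain ⟨u, hu⟩ := hU
      have hker : (algebraMap ℂ (Hw ω →L[ℂ] Hw ω) z⁻¹ - P) f = 0 := by
        rw [Algebra.algebraMap_eq_smul_one, ContinuousLinearMap.sub_apply,
          ContinuousLinearMap.smul_apply, ContinuousLinearMap.one_apply, heig, sub_self]
      apply hfne
      calc f = ((↑u⁻¹ * ↑u : Hw ω →L[ℂ] Hw ω)) f := by rw [Units.inv_mul]; rfl
        _ = (↑u⁻¹ : Hw ω →L[ℂ] Hw ω) ((↑u : Hw ω →L[ℂ] Hw ω) f) := rfl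
        _ = 0 := by rw [hu, hker, map_zero]
    -- contradiction with the spectral radius
    have hnorm : Real.exp (α₁ * t) < ‖z⁻¹‖ := by
      rw [norm_inv]
      have h1 : (Real.exp (-α₁ * t))⁻¹ < ‖z‖⁻¹ := by
        apply inv_strictAnti₀ hz0 hz1
      rwa [neg_mul, Real.exp_neg, inv_inv] at h1
    have hlt : spectralRadius ℂ P < ‖z⁻¹‖₊ := by
      rw [hρ, show ((‖z⁻¹‖₊ : ENNReal)) = ENNReal.ofReal ‖z⁻¹‖ from (ofReal_norm z⁻¹).symm]
      exact (ENNReal.ofReal_lt_ofReal_iff (lt_trans (Real.exp_pos _) hnorm)).mpr hnorm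
    exact hmem (spectrum.mem_resolventSet_of_spectralRadius_lt hlt)
  refine ⟨?_, hnsurj⟩
  rw [spectrum.mem_iff]
  intro hU
  apply hnsurj
  obtain ⟨u, hu⟩ := hU
  intro y
  refine ⟨(↑u⁻¹ : Hw ω →L[ℂ] Hw ω) y, ?_⟩
  have : (z • (1 : Hw ω →L[ℂ] Hw ω) - S) = (↑u : Hw ω →L[ℂ] Hw ω) := by
    rw [hu, Algebra.algebraMap_eq_smul_one]
  rw [this]
  calc (↑u : Hw ω →L[ℂ] Hw ω) ((↑u⁻¹ : Hw ω →L[ℂ] Hw ω) y)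
      = ((↑u * ↑u⁻¹ : Hw ω →L[ℂ] Hw ω)) y := rfl
    _ = y := by rw [Units.mul_inv]; rfl
end

section
/- The approximate point spectrum of Sₜ is contained in the annulus {z ∈ ℂ : e^{−α₁ t} ≤ |z| ≤ e^{α₀ t}}; in particular 0 and all z with 0 < |z| < e^{−α₁ t} are not approximate eigenvalues of Sₜ. -/
open MeasureTheory Filter

/-- The approximate point spectrum of a bounded operator `T`: the set of `z`
for which there are unit vectors `fₙ` with `‖(zI - T) fₙ‖ → 0`. -/
def approxPointSpectrum {X : Type*} [NormedAddCommGroup X] [NormedSpace ℂ X]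
    (T : X →L[ℂ] X) : Set ℂ :=
  {z : ℂ | ∃ f : ℕ → X, (∀ n, ‖f n‖ = 1) ∧
    Filter.Tendsto (fun n => ‖z • f n - T (f n)‖) Filter.atTop (nhds 0)}


section Aux
open Filter

lemma aux_approx_subset_spectrum {X : Type*} [NormedAddCommGroup X] [NormedSpace ℂ X]
    (T : X →L[ℂ] X) : approxPointSpectrum T ⊆ spectrum ℂ T := by
  rintro z ⟨f, hf, hlim⟩
  by_contra hz
  rw [spectrum.notMem_iff] at hz
  obtain ⟨u, hu⟩ := hz
  have key : ∀ n, (1:ℝ) ≤ ‖(↑u⁻¹ : X →L[ℂ] X)‖ * ‖z • f n - T (f n)‖ := by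
    intro n
    have h1 : (↑u⁻¹ * ↑u : X →L[ℂ] X) (f n) = f n := by
      rw [u.inv_mul]; rfl
    have h2 : (↑u : X →L[ℂ] X) (f n) = z • f n - T (f n) := by
      rw [hu]
      simp [Algebra.algebraMap_eq_smul_one]
    calc (1:ℝ) = ‖f n‖ := (hf n).symm
    _ = ‖(↑u⁻¹ : X →L[ℂ] X) (z • f n - T (f n))‖ := by
        rw [← h2, ← ContinuousLinearMap.mul_apply, h1]
    _ ≤ ‖(↑u⁻¹ : X →L[ℂ] X)‖ * ‖z • f n - T (f n)‖ :=
        ContinuousLinearMap.le_opNorm _ _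
  have hlim2 : Tendsto (fun n => ‖(↑u⁻¹ : X →L[ℂ] X)‖ * ‖z • f n - T (f n)‖)
      atTop (nhds 0) := by
    simpa using hlim.const_mul ‖(↑u⁻¹ : X →L[ℂ] X)‖
  have := le_of_tendsto_of_tendsto' tendsto_const_nhds hlim2 key
  linarith

lemma aux_norm_le {X : Type*} [NormedAddCommGroup X] [NormedSpace ℂ X]
    (T : X →L[ℂ] X) {z : ℂ} (hz : z ∈ spectrum ℂ T) {r : ℝ} (h0 : 0 ≤ r)
    (hr : spectralRadius ℂ T = ENNReal.ofReal r) : ‖z‖ ≤ r := by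
  have h1 : (‖z‖₊ : ENNReal) ≤ spectralRadius ℂ T :=
    le_iSup₂ (f := fun k (_ : k ∈ spectrum ℂ T) => (‖k‖₊ : ENNReal)) z hz
  rw [hr, ← enorm_eq_nnnorm, ← ofReal_norm] at h1
  exact (ENNReal.ofReal_le_ofReal_iff h0).mp h1

end Aux

set_option maxHeartbeats 1000000 in
set_option synthInstance.maxHeartbeats 400000 in
/-- the approximate point spectrum of `Sₜ` is contained in the
annulus `{z : e^{-α₁ t} ≤ |z| ≤ e^{α₀ t}}`. -/
theorem stmt_7 (ω : ℝ → ℝ) (hω : IsWeight ω) (t : ℝ) (ht : 0 < t)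
    (S P : Hw ω →L[ℂ] Hw ω) (hS : IsRightShift ω t S) (hP : IsLeftShift ω t P)
    (hPS : P.comp S = 1)
    (α₀ α₁ : ℝ)
    (hρS : spectralRadius ℂ S = ENNReal.ofReal (Real.exp (α₀ * t)))
    (hρP : spectralRadius ℂ P = ENNReal.ofReal (Real.exp (α₁ * t))) :
    approxPointSpectrum S ⊆
      {z : ℂ | Real.exp (-α₁ * t) ≤ ‖z‖ ∧ ‖z‖ ≤ Real.exp (α₀ * t)} := by
  intro z hz
  obtain ⟨f, hf, hlim⟩ := hz
  -- Upper bound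
  have hzS : z ∈ spectrum ℂ S := aux_approx_subset_spectrum S ⟨f, hf, hlim⟩
  have hupper : ‖z‖ ≤ Real.exp (α₀ * t) :=
    aux_norm_le S hzS (Real.exp_pos _).le hρS
  -- z ≠ 0
  have hz0 : z ≠ 0 := by
    intro h0
    subst h0
    have hSlim : Tendsto (fun n => ‖S (f n)‖) atTop (nhds 0) := by
      simpa using hlim
    have key : ∀ n, (1:ℝ) ≤ ‖P‖ * ‖S (f n)‖ := by
      intro n
      calc (1:ℝ) = ‖f n‖ := (hf n).symm
      _ = ‖P (S (f n))‖ := by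
          rw [← ContinuousLinearMap.comp_apply, hPS]; rfl
      _ ≤ ‖P‖ * ‖S (f n)‖ := ContinuousLinearMap.le_opNorm _ _
    have hlim2 : Tendsto (fun n => ‖P‖ * ‖S (f n)‖) atTop (nhds 0) := by
      simpa using hSlim.const_mul ‖P‖
    have := le_of_tendsto_of_tendsto' tendsto_const_nhds hlim2 key
    linarith
  -- Lower bound: 1/z ∈ approx point spectrum of P
  have hinv : (1/z) ∈ approxPointSpectrum P := by
    refine ⟨f, hf, ?_⟩
    have heq : ∀ n, (1/z) • f n - P (f n) = -((1/z) • P (z • f n - S (f n))) := by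
      intro n
      have hPSf : P (S (f n)) = f n := by
        rw [← ContinuousLinearMap.comp_apply, hPS]; rfl
      rw [map_sub, _root_.map_smul, smul_sub, hPSf, smul_smul, one_div,
        inv_mul_cancel₀ hz0, one_smul, neg_sub]
    have hbound : ∀ n, ‖(1/z) • f n - P (f n)‖ ≤ (1/‖z‖) * (‖P‖ * ‖z • f n - S (f n)‖) := by
      intro n
      rw [heq n, norm_neg, norm_smul]
      simp only [norm_div, norm_one]
      gcongr
      exact ContinuousLinearMap.le_opNorm _ _
    have hlim2 : Tendsto (fun n => (1/‖z‖) * (‖P‖ * ‖z • f n - S (f n)‖)) atTop (nhds 0) := by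
      have := (hlim.const_mul ‖P‖).const_mul (1/‖z‖)
      simpa using this
    exact squeeze_zero (fun n => norm_nonneg _) hbound hlim2
  have hzP : (1/z) ∈ spectrum ℂ P := aux_approx_subset_spectrum P hinv
  have hle : ‖(1/z : ℂ)‖ ≤ Real.exp (α₁ * t) :=
    aux_norm_le P hzP (Real.exp_pos _).le hρP
  rw [norm_div, norm_one] at hle
  have hzpos : 0 < ‖z‖ := norm_pos_iff.mpr hz0
  have hlower : Real.exp (-α₁ * t) ≤ ‖z‖ := by
    rw [neg_mul, Real.exp_neg]
    rw [div_le_iff₀ hzpos] at hle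
    rw [inv_le_iff_one_le_mul₀ (Real.exp_pos _)]
    calc (1:ℝ) ≤ Real.exp (α₁ * t) * ‖z‖ := hle
    _ = ‖z‖ * Real.exp (α₁ * t) := mul_comm _ _
  exact ⟨hlower, hupper⟩
end

section
/- Let μ : ℝ → ℂ be essentially bounded and continuous at some η₀ ∈ ℝ, with λ = μ(η₀). Suppose there is a constant C > 0 such that for every f ∈ L²(ℝ⁺) (extended by 0 to ℝ), ‖f̂‖_{L²} ≤ C ‖(μ − λ)f̂‖_{L²}. Then this leads to a contradiction; i.e., no such C exists. Equivalently: for every C > 0 there exists f ∈ L²(ℝ⁺), f ≠ 0, with ‖f̂‖_{L²} > C‖(μ−λ)f̂‖_{L²}. -/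
open MeasureTheory

/-- The Fourier transform `f̂(ξ) = ∫ f(t) e^{-itξ} dt`. -/
noncomputable def FT (f : ℝ → ℂ) (ξ : ℝ) : ℂ :=
  ∫ t : ℝ, f t * Complex.exp (-Complex.I * t * ξ)

section Aux

open Set Complex

lemma aux_exp_int {c : ℂ} (hc : c.re < 0) :
    ∫ t in Set.Ioi (0:ℝ), Complex.exp (c * t) = -c⁻¹ := by
  have hc0 : c ≠ 0 := fun h => by simp [h] at hc
  have hderiv : ∀ x ∈ Set.Ioi (0:ℝ),
      HasDerivAt (fun t : ℝ => Complex.exp (c * t) / c) (Complex.exp (c * x)) x := by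
    intro x _
    have h1 : HasDerivAt (fun z : ℂ => Complex.exp (c * z) / c) (Complex.exp (c * x)) (x : ℂ) := by
      have := (((hasDerivAt_id (x:ℂ)).const_mul c).cexp).div_const c
      simpa [mul_one, mul_div_assoc, mul_div_cancel_left₀ _ hc0, mul_comm] using this
    exact h1.comp_ofReal
  have hint : IntegrableOn (fun t : ℝ => Complex.exp (c * t)) (Set.Ioi 0) := by
    apply Integrable.mono' ((exp_neg_integrableOn_Ioi 0 (show (0:ℝ) < -c.re by linarith)))
    · exact (Complex.continuous_exp.comp (continuous_const.mul Complex.continuous_ofReal)).aestronglyMeasurable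
    · filter_upwards with t
      simp [Complex.norm_exp, neg_mul, mul_comm]
  have htend : Filter.Tendsto (fun t : ℝ => Complex.exp (c * t) / c) Filter.atTop (nhds 0) := by
    rw [tendsto_zero_iff_norm_tendsto_zero]
    have : (fun t : ℝ => ‖Complex.exp (c * t) / c‖) = fun t => Real.exp (c.re * t) / ‖c‖ := by
      funext t; simp [Complex.norm_exp]
    rw [this]
    have h2 : Filter.Tendsto (fun t : ℝ => Real.exp (c.re * t)) Filter.atTop (nhds 0) := by
      apply Real.tendsto_exp_atBot.comp
      exact Filter.Tendsto.const_mul_atTop_of_neg hc Filter.tendsto_id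
    simpa using h2.div_const ‖c‖
  have hcont : ContinuousWithinAt (fun t : ℝ => Complex.exp (c * t) / c) (Set.Ici 0) 0 :=
    ((Complex.continuous_exp.comp (continuous_const.mul Complex.continuous_ofReal)).div_const c).continuousWithinAt
  have := integral_Ioi_of_hasDerivAt_of_tendsto hcont hderiv hint htend
  rw [this]
  simp [neg_div, div_eq_mul_inv]

lemma aux_FT {a η₀ : ℝ} (ha : 0 < a) (ξ : ℝ) :
    FT (Set.indicator (Set.Ici (0:ℝ)) (fun t => Complex.exp ((-a + η₀ * Complex.I) * t))) ξ
      = ((a : ℂ) + (ξ - η₀) * Complex.I)⁻¹ := by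
  set c : ℂ := -a + (η₀ - ξ) * Complex.I with hcdef
  have key : (fun t : ℝ =>
      Set.indicator (Set.Ici (0:ℝ)) (fun t => Complex.exp ((-a + η₀ * Complex.I) * t)) t
        * Complex.exp (-Complex.I * t * ξ))
      = Set.indicator (Set.Ici (0:ℝ)) (fun t : ℝ => Complex.exp (c * t)) := by
    funext t
    by_cases ht : t ∈ Set.Ici (0:ℝ)
    · rw [Set.indicator_of_mem ht, Set.indicator_of_mem ht, ← Complex.exp_add, hcdef]
      ring_nf
    · rw [Set.indicator_of_notMem ht, Set.indicator_of_notMem ht, zero_mul]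
  have hre : c.re < 0 := by simp [hcdef]; linarith
  rw [FT, key, integral_indicator measurableSet_Ici,
    setIntegral_congr_set MeasureTheory.Ioi_ae_eq_Ici.symm, aux_exp_int hre, ← inv_neg]
  congr 1
  rw [hcdef]
  ring

lemma aux_half {δ : ℝ} (hδ : 0 < δ) :
    ∫⁻ u in Set.Ici δ, ENNReal.ofReal ((u^2)⁻¹) = ENNReal.ofReal δ⁻¹ := by
  rw [setLIntegral_congr (MeasureTheory.Ioi_ae_eq_Ici (μ := volume) (a := δ)).symm]
  have hcong : ∫⁻ u in Set.Ioi δ, ENNReal.ofReal ((u^2)⁻¹)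
      = ∫⁻ u in Set.Ioi δ, ENNReal.ofReal (u ^ (-2:ℝ)) := by
    apply setLIntegral_congr_fun measurableSet_Ioi
    intro x hx
    beta_reduce
    congr 1
    rw [Real.rpow_neg (le_of_lt (hδ.trans hx)), Real.rpow_two]
  rw [hcong, ← ofReal_integral_eq_lintegral_ofReal
      (integrableOn_Ioi_rpow_of_lt (by norm_num) hδ)]
  · rw [integral_Ioi_rpow_of_lt (by norm_num) hδ]
    norm_num
    rw [Real.rpow_neg_one]
  · filter_upwards [ae_restrict_mem measurableSet_Ioi] with x hx
    exact Real.rpow_nonneg (le_of_lt (hδ.trans hx)) _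

lemma aux_half' {δ : ℝ} (hδ : 0 < δ) :
    ∫⁻ u in Set.Iic (-δ), ENNReal.ofReal ((u^2)⁻¹) = ENNReal.ofReal δ⁻¹ := by
  have := (Measure.measurePreserving_neg (volume : Measure ℝ)).setLIntegral_comp_emb
    (MeasurableEquiv.neg ℝ).measurableEmbedding
    (fun u => ENNReal.ofReal ((u^2)⁻¹)) (Set.Ici δ)
  simp only [neg_sq] at this
  rw [Set.image_neg_eq_neg, Set.neg_Ici] at this
  rw [← aux_half hδ]
  exact this.symm

lemma aux_tail {δ : ℝ} (m : ℝ) (hδ : 0 < δ) :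
    ∫⁻ ξ in {ξ : ℝ | δ ≤ |ξ - m|}, ENNReal.ofReal (((ξ - m)^2)⁻¹)
      ≤ ENNReal.ofReal (2/δ) := by
  have htrans := (measurePreserving_add_right (volume : Measure ℝ) m).setLIntegral_comp_emb
    (MeasurableEquiv.addRight m).measurableEmbedding
    (fun ξ => ENNReal.ofReal (((ξ - m)^2)⁻¹)) {u : ℝ | δ ≤ |u|}
  have himg : (· + m) '' {u : ℝ | δ ≤ |u|} = {ξ : ℝ | δ ≤ |ξ - m|} := by
    ext x
    constructor
    · rintro ⟨u, hu, rfl⟩; simpa using hu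
    · intro hx; exact ⟨x - m, hx, by ring⟩
  simp only [add_sub_cancel_right] at htrans
  rw [himg] at htrans
  rw [← htrans]
  have hsub : {u : ℝ | δ ≤ |u|} ⊆ Set.Iic (-δ) ∪ Set.Ici δ := by
    intro u hu
    rcases le_abs'.mp (show δ ≤ |u| from hu) with h | h
    · exact Or.inl h
    · exact Or.inr h
  calc ∫⁻ u in {u : ℝ | δ ≤ |u|}, ENNReal.ofReal ((u^2)⁻¹)
      ≤ ∫⁻ u in Set.Iic (-δ) ∪ Set.Ici δ, ENNReal.ofReal ((u^2)⁻¹) :=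
        lintegral_mono_set hsub
    _ ≤ (∫⁻ u in Set.Iic (-δ), ENNReal.ofReal ((u^2)⁻¹))
        + ∫⁻ u in Set.Ici δ, ENNReal.ofReal ((u^2)⁻¹) := lintegral_union_le _ _ _
    _ = ENNReal.ofReal δ⁻¹ + ENNReal.ofReal δ⁻¹ := by rw [aux_half hδ, aux_half' hδ]
    _ = ENNReal.ofReal (2/δ) := by
        rw [← ENNReal.ofReal_add (by positivity) (by positivity)]
        congr 1; field_simp; ring

end Aux

/-- let `μ : ℝ → ℂ` be essentially bounded and continuous at
`η₀`, with `λ = μ(η₀)`. Then for every `C > 0` there exists `f ∈ L²(ℝ⁺)`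
(extended by `0` to `ℝ`), `f ≠ 0`, with `‖f̂‖_{L²} > C ‖(μ - λ) f̂‖_{L²}`;
i.e. no constant `C` can satisfy `‖f̂‖ ≤ C ‖(μ - λ) f̂‖` for all such `f`. -/
theorem stmt_18 (μ : ℝ → ℂ) (η₀ : ℝ)
    (hbdd : ∃ M : ℝ, ∀ᵐ ξ : ℝ, ‖μ ξ‖ ≤ M)
    (hcont : ContinuousAt μ η₀) :
    ∀ C : ℝ, 0 < C → ∃ f : ℝ → ℂ,
      MemLp f 2 (volume : Measure ℝ) ∧
      (∀ x : ℝ, x < 0 → f x = 0) ∧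
      ¬ (f =ᵐ[(volume : Measure ℝ)] 0) ∧
      ENNReal.ofReal C *
          eLpNorm (fun ξ => (μ ξ - μ η₀) * FT f ξ) 2 (volume : Measure ℝ) <
        eLpNorm (FT f) 2 (volume : Measure ℝ) := by
  intro C hC
  obtain ⟨M, hM⟩ := hbdd
  set M' : ℝ := max M 0 + ‖μ η₀‖ + 1 with hM'def
  have hM1 : 1 ≤ M' := by
    have : (0:ℝ) ≤ max M 0 := le_max_right _ _
    have := norm_nonneg (μ η₀)
    simp only [hM'def]; linarith
  have hae : ∀ᵐ ξ : ℝ, ‖μ ξ - μ η₀‖ ≤ M' := by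
    filter_upwards [hM] with ξ hξ
    calc ‖μ ξ - μ η₀‖ ≤ ‖μ ξ‖ + ‖μ η₀‖ := norm_sub_le _ _
      _ ≤ max M 0 + ‖μ η₀‖ + 1 := by
          have : M ≤ max M 0 := le_max_left _ _
          linarith
  set ε : ℝ := 1 / (2 * C) with hεdef
  have hε : 0 < ε := by positivity
  obtain ⟨δ, hδpos, hδ⟩ : ∃ δ > 0, ∀ ξ : ℝ, |ξ - η₀| < δ → ‖μ ξ - μ η₀‖ ≤ ε := by
    rcases Metric.continuousAt_iff.mp hcont ε hε with ⟨δ, hδpos, h⟩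
    exact ⟨δ, hδpos, fun ξ hξ => le_of_lt (by
      have := h (show dist ξ η₀ < δ by rwa [Real.dist_eq])
      rwa [dist_eq_norm] at this)⟩
  set a : ℝ := min 1 (δ / (16 * C^2 * M'^2)) with hadef
  have ha : 0 < a := by
    apply lt_min one_pos
    positivity
  have haδ : a ≤ δ / (16 * C^2 * M'^2) := min_le_right _ _
  -- the function
  set f : ℝ → ℂ := Set.indicator (Set.Ici (0:ℝ))
    (fun t => Complex.exp ((-a + η₀ * Complex.I) * t)) with hfdef
  have hFT : ∀ ξ : ℝ, FT f ξ = ((a : ℂ) + (ξ - η₀) * Complex.I)⁻¹ := fun ξ => aux_FT ha ξ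
  clear_value M' ε a f
  refine ⟨f, ?_, ?_, ?_, ?_⟩
  · -- Memℒp
    have hmeas : AEStronglyMeasurable f volume := by
      rw [hfdef]
      exact ((Complex.continuous_exp.comp
        (continuous_const.mul Complex.continuous_ofReal)).aestronglyMeasurable).indicator
        measurableSet_Ici
    rw [memLp_two_iff_integrable_sq_norm hmeas]
    have heq : (fun x => ‖f x‖^2)
        = Set.indicator (Set.Ici (0:ℝ)) (fun t => Real.exp (-(2*a) * t)) := by
      funext t
      by_cases ht : t ∈ Set.Ici (0:ℝ)
      · rw [hfdef]
        rw [Set.indicator_of_mem ht, Set.indicator_of_mem ht]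
        rw [Complex.norm_exp, ← Real.exp_nat_mul]
        congr 1
        simp
        ring
      · rw [hfdef, Set.indicator_of_notMem ht, Set.indicator_of_notMem ht]
        simp
    rw [heq, integrable_indicator_iff measurableSet_Ici,
      integrableOn_Ici_iff_integrableOn_Ioi]
    exact exp_neg_integrableOn_Ioi 0 (by positivity)
  · -- support
    intro x hx
    rw [hfdef]
    exact Set.indicator_of_notMem (by simpa using hx) _
  · -- nonzero
    intro h
    have hnull : volume {x : ℝ | f x ≠ 0} = 0 := by
      have := h
      rw [Filter.eventuallyEq_iff_exists_mem] at this
      obtain ⟨s, hs, hfs⟩ := this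
      apply measure_mono_null (s := {x : ℝ | f x ≠ 0}) (t := sᶜ)
      · intro x hx
        by_contra hxs
        exact hx (hfs (not_not.mp hxs))
      · rwa [MeasureTheory.mem_ae_iff] at hs
    have hsub : Set.Ici (0:ℝ) ⊆ {x : ℝ | f x ≠ 0} := by
      intro x hx
      simp only [Set.mem_setOf_eq, hfdef, Set.indicator_of_mem hx]
      exact Complex.exp_ne_zero _
    have := measure_mono_null hsub hnull
    rw [Real.volume_Ici] at this
    exact ENNReal.top_ne_zero this
  · -- the estimate
    set g : ℝ → ENNReal := fun ξ => ENNReal.ofReal ((a^2 + (ξ-η₀)^2)⁻¹) with hgdef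
    have hnormFT : ∀ ξ : ℝ, ((‖FT f ξ‖₊ : ENNReal))^2 = g ξ := by
      intro ξ
      rw [hgdef, ← enorm_eq_nnnorm, ← ofReal_norm, ← ENNReal.ofReal_pow (norm_nonneg _)]
      congr 1
      rw [hFT ξ, norm_inv, inv_pow]
      congr 1
      have hz : ((a:ℂ) + ((ξ:ℂ) - (η₀:ℂ)) * Complex.I)
          = (a:ℂ) + ((ξ - η₀ : ℝ):ℂ) * Complex.I := by push_cast; ring
      rw [hz, Complex.sq_norm, Complex.normSq_add_mul_I]
    set L : ENNReal := ∫⁻ ξ : ℝ, g ξ with hLdef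
    set Rq : ENNReal := ∫⁻ ξ : ℝ, (‖μ ξ - μ η₀‖₊ : ENNReal)^2 * g ξ with hRdef
    have hLeq : eLpNorm (FT f) 2 volume = L ^ (1/2 : ℝ) := by
      rw [eLpNorm_eq_lintegral_rpow_enorm_toReal two_ne_zero ENNReal.ofNat_ne_top]
      simp only [ENNReal.toReal_ofNat]
      congr 1
      apply lintegral_congr
      intro ξ
      rw [ENNReal.rpow_two, enorm_eq_nnnorm, hnormFT ξ]
    have hReq : eLpNorm (fun ξ => (μ ξ - μ η₀) * FT f ξ) 2 volume = Rq ^ (1/2 : ℝ) := by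
      rw [eLpNorm_eq_lintegral_rpow_enorm_toReal two_ne_zero ENNReal.ofNat_ne_top]
      simp only [ENNReal.toReal_ofNat]
      congr 1
      apply lintegral_congr
      intro ξ
      rw [ENNReal.rpow_two, enorm_eq_nnnorm, nnnorm_mul, ENNReal.coe_mul, mul_pow, hnormFT ξ]
    -- lower bound for L
    have hLlow : ENNReal.ofReal a⁻¹ ≤ L := by
      have h1 : ENNReal.ofReal a⁻¹
          = ∫⁻ _ in Set.Icc (η₀-a) (η₀+a), ENNReal.ofReal ((2*a^2)⁻¹) := by
        rw [setLIntegral_const, Real.volume_Icc,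
          ← ENNReal.ofReal_mul (by positivity)]
        congr 1
        rw [show η₀ + a - (η₀ - a) = 2*a by ring]
        field_simp
      rw [h1]
      refine le_trans (setLIntegral_mono' measurableSet_Icc fun ξ hξ => ?_)
        (setLIntegral_le_lintegral _ _)
      apply ENNReal.ofReal_le_ofReal
      apply inv_anti₀ (by positivity)
      obtain ⟨h1', h2'⟩ := hξ
      nlinarith
    -- upper bound for L
    have hLtop : L ≠ ⊤ := by
      have hsplit := lintegral_add_compl g
        (measurableSet_Icc : MeasurableSet (Set.Icc (η₀-1) (η₀+1)))
        (μ := (volume : Measure ℝ))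
      have hb1 : ∫⁻ ξ in Set.Icc (η₀-1) (η₀+1), g ξ
          ≤ ENNReal.ofReal ((a^2)⁻¹) * volume (Set.Icc (η₀-1) (η₀+1)) := by
        rw [← setLIntegral_const]
        apply setLIntegral_mono' measurableSet_Icc
        intro ξ _
        apply ENNReal.ofReal_le_ofReal
        apply inv_anti₀ (by positivity)
        nlinarith [sq_nonneg (ξ - η₀)]
      have hb2 : ∫⁻ ξ in (Set.Icc (η₀-1) (η₀+1))ᶜ, g ξ ≤ ENNReal.ofReal (2/1) := by
        refine le_trans (setLIntegral_mono' measurableSet_Icc.compl fun ξ hξ => ?_)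
          (le_trans (lintegral_mono_set fun ξ hξ => ?_) (aux_tail η₀ one_pos))
        · apply ENNReal.ofReal_le_ofReal
          apply inv_anti₀
          · have : ¬ (η₀ - 1 ≤ ξ ∧ ξ ≤ η₀ + 1) := by simpa [Set.mem_Icc] using hξ
            rcases not_and_or.mp this with h | h
            · nlinarith [not_le.mp h]
            · nlinarith [not_le.mp h]
          · nlinarith [sq_nonneg a]
        · have : ¬ (η₀ - 1 ≤ ξ ∧ ξ ≤ η₀ + 1) := by simpa [Set.mem_Icc] using hξ
          show (1:ℝ) ≤ |ξ - η₀|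
          rcases not_and_or.mp this with h | h
          · rw [abs_sub_comm, le_abs]; left; linarith [not_le.mp h]
          · rw [le_abs]; left; linarith [not_le.mp h]
      rw [hLdef, ← hsplit]
      exact ne_top_of_le_ne_top (by
        apply ENNReal.add_ne_top.mpr
        constructor
        · exact ne_top_of_le_ne_top (ENNReal.mul_ne_top ENNReal.ofReal_ne_top
            (by rw [Real.volume_Icc]; exact ENNReal.ofReal_ne_top)) hb1
        · exact ne_top_of_le_ne_top ENNReal.ofReal_ne_top hb2) le_rfl
    -- upper bound for Rq
    have hRle : Rq ≤ ENNReal.ofReal (ε^2) * L + ENNReal.ofReal (M'^2) * ENNReal.ofReal (2/δ) := by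
      have hS : MeasurableSet (Metric.ball η₀ δ) := measurableSet_ball
      have hsplit := lintegral_add_compl (fun ξ => (‖μ ξ - μ η₀‖₊ : ENNReal)^2 * g ξ) hS
        (μ := (volume : Measure ℝ))
      have hb1 : ∫⁻ ξ in Metric.ball η₀ δ, (‖μ ξ - μ η₀‖₊ : ENNReal)^2 * g ξ
          ≤ ENNReal.ofReal (ε^2) * L := by
        calc ∫⁻ ξ in Metric.ball η₀ δ, (‖μ ξ - μ η₀‖₊ : ENNReal)^2 * g ξ
            ≤ ∫⁻ ξ in Metric.ball η₀ δ, ENNReal.ofReal (ε^2) * g ξ := by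
              apply setLIntegral_mono' hS
              intro ξ hξ
              apply mul_le_mul_left
              rw [← enorm_eq_nnnorm, ← ofReal_norm, ← ENNReal.ofReal_pow (norm_nonneg _)]
              apply ENNReal.ofReal_le_ofReal
              have hmem : |ξ - η₀| < δ := by rwa [Metric.mem_ball, Real.dist_eq] at hξ
              exact pow_le_pow_left₀ (norm_nonneg _) (hδ ξ hmem) 2
          _ ≤ ∫⁻ ξ : ℝ, ENNReal.ofReal (ε^2) * g ξ := setLIntegral_le_lintegral _ _
          _ = ENNReal.ofReal (ε^2) * L := lintegral_const_mul' _ _ ENNReal.ofReal_ne_top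
      have hb2 : ∫⁻ ξ in (Metric.ball η₀ δ)ᶜ, (‖μ ξ - μ η₀‖₊ : ENNReal)^2 * g ξ
          ≤ ENNReal.ofReal (M'^2) * ENNReal.ofReal (2/δ) := by
        have step1 : ∫⁻ ξ in (Metric.ball η₀ δ)ᶜ, (‖μ ξ - μ η₀‖₊ : ENNReal)^2 * g ξ
            ≤ ∫⁻ ξ in (Metric.ball η₀ δ)ᶜ,
              ENNReal.ofReal (M'^2) * ENNReal.ofReal (((ξ - η₀)^2)⁻¹) := by
          apply setLIntegral_mono_ae' hS.compl
          filter_upwards [hae] with ξ hbound hmem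
          have hge : δ ≤ |ξ - η₀| := by
            rw [Set.mem_compl_iff, Metric.mem_ball, Real.dist_eq, not_lt] at hmem
            exact hmem
          apply mul_le_mul'
          · rw [← enorm_eq_nnnorm, ← ofReal_norm, ← ENNReal.ofReal_pow (norm_nonneg _)]
            exact ENNReal.ofReal_le_ofReal (pow_le_pow_left₀ (norm_nonneg _) hbound 2)
          · apply ENNReal.ofReal_le_ofReal
            apply inv_anti₀
            · nlinarith [abs_nonneg (ξ - η₀), sq_abs (ξ - η₀)]
            · nlinarith [sq_nonneg a]
        have step2 : ∫⁻ ξ in (Metric.ball η₀ δ)ᶜ,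
            ENNReal.ofReal (M'^2) * ENNReal.ofReal (((ξ - η₀)^2)⁻¹)
            ≤ ENNReal.ofReal (M'^2) * ENNReal.ofReal (2/δ) := by
          rw [lintegral_const_mul' _ _ ENNReal.ofReal_ne_top]
          apply mul_le_mul_right
          refine le_trans (lintegral_mono_set fun ξ hξ => ?_) (aux_tail η₀ hδpos)
          rw [Set.mem_compl_iff, Metric.mem_ball, Real.dist_eq, not_lt] at hξ
          exact hξ
        exact le_trans step1 step2
      rw [hRdef, ← hsplit]
      exact add_le_add hb1 hb2
    have hRtop : Rq ≠ ⊤ := by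
      apply ne_top_of_le_ne_top _ hRle
      apply ENNReal.add_ne_top.mpr
      exact ⟨ENNReal.mul_ne_top ENNReal.ofReal_ne_top hLtop,
        ENNReal.mul_ne_top ENNReal.ofReal_ne_top ENNReal.ofReal_ne_top⟩
    -- pass to real numbers
    set l : ℝ := L.toReal with hldef
    set r : ℝ := Rq.toReal with hrdef
    have hl : a⁻¹ ≤ l := by
      have := ENNReal.toReal_mono hLtop hLlow
      rwa [ENNReal.toReal_ofReal (by positivity)] at this
    have hlpos : 0 < l := lt_of_lt_of_le (by positivity) hl
    have hr : r ≤ ε^2 * l + M'^2 * (2/δ) := by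
      have h := ENNReal.toReal_mono (by
        apply ENNReal.add_ne_top.mpr
        exact ⟨ENNReal.mul_ne_top ENNReal.ofReal_ne_top hLtop,
          ENNReal.mul_ne_top ENNReal.ofReal_ne_top ENNReal.ofReal_ne_top⟩) hRle
      rwa [ENNReal.toReal_add (ENNReal.mul_ne_top ENNReal.ofReal_ne_top hLtop)
          (ENNReal.mul_ne_top ENNReal.ofReal_ne_top ENNReal.ofReal_ne_top),
        ENNReal.toReal_mul, ENNReal.toReal_mul,
        ENNReal.toReal_ofReal (by positivity), ENNReal.toReal_ofReal (by positivity),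
        ENNReal.toReal_ofReal (by positivity)] at h
    have hrnonneg : 0 ≤ r := ENNReal.toReal_nonneg
    -- the key real inequality
    have key : C^2 * r < l := by
      have h1 : C^2 * ε^2 = 1/4 := by
        rw [hεdef]; field_simp; ring
      have hδge : a * (16 * C^2 * M'^2) ≤ δ :=
        (le_div_iff₀ (by positivity)).mp haδ
      have h3 : C^2 * (M'^2 * (2/δ)) ≤ 1/(8*a) := by
        rw [show C^2 * (M'^2 * (2/δ)) = (2*C^2*M'^2)/δ by ring,
          div_le_div_iff₀ hδpos (by positivity)]
        nlinarith
      have h4 : 1/(8*a) ≤ l/8 := by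
        rw [div_le_div_iff₀ (by positivity) (by norm_num)]
        nlinarith [mul_le_mul_of_nonneg_right hl ha.le,
          inv_mul_cancel₀ (ne_of_gt ha)]
      have h5 : C^2 * r ≤ C^2 * (ε^2 * l) + C^2 * (M'^2 * (2/δ)) := by
        have := mul_le_mul_of_nonneg_left hr (sq_nonneg C)
        rw [mul_add] at this
        exact this
      have h6 : C^2 * (ε^2 * l) = 1/4 * l := by rw [← mul_assoc, h1]
      linarith
    -- conclude
    rw [hLeq, hReq, show L = ENNReal.ofReal l from (ENNReal.ofReal_toReal hLtop).symm,
      show Rq = ENNReal.ofReal r from (ENNReal.ofReal_toReal hRtop).symm,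
      ENNReal.ofReal_rpow_of_nonneg hrnonneg (by norm_num),
      ENNReal.ofReal_rpow_of_nonneg ENNReal.toReal_nonneg (by norm_num),
      ← Real.sqrt_eq_rpow, ← Real.sqrt_eq_rpow,
      ← ENNReal.ofReal_mul hC.le,
      ENNReal.ofReal_lt_ofReal_iff (Real.sqrt_pos.mpr hlpos)]
    have : C * Real.sqrt r = Real.sqrt (C^2 * r) := by
      rw [Real.sqrt_mul (sq_nonneg C), Real.sqrt_sq hC.le]
    rw [this]
    exact Real.sqrt_lt_sqrt (by positivity) key
end
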